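/- Let U be a Banach space with a bimonotone basis such that ℓ₁ is finitely represented on block sequences with constant 2 (i.e., for every m there is a normalized block sequence of length m that is 2-equivalent to the ℓ₁^m basis). Then for every n ∈ ℕ there exists x ∈ U with 1/2 ≤ ‖x‖ ≤ ‖x‖_n ≤ 2, where ‖x‖_n = sup{∑_{j=1}^n ‖E_j x‖ : E_1 < ... < E_n intervals}. -/

import Mathlib

open Finset in
/-- The restriction `Ex` of a finitely supported vector `x` to the coordinates in `E`. -/
noncomputable def restrictF (x : ℕ →₀ ℝ) (E : Finset ℕ) : ℕ →₀ ℝ :=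
  Finsupp.filter (· ∈ E) x

/-- A (Banach) space with a bimonotone Schauder basis, modelled on the linear span of the
basis: the space of finitely supported real sequences endowed with a norm `N` for which
restrictions to intervals have norm at most the norm of the vector. -/
structure BmBasis where
  N : (ℕ →₀ ℝ) → ℝ
  norm_nonneg : ∀ x, 0 ≤ N x
  norm_eq_zero_iff : ∀ x, N x = 0 ↔ x = 0
  norm_add_le : ∀ x y, N (x + y) ≤ N x + N y
  norm_smul : ∀ (a : ℝ) (x), N (a • x) = |a| * N x
  bimono : ∀ (x : ℕ →₀ ℝ) (a b : ℕ), N (restrictF x (Finset.Icc a b)) ≤ N x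

/-- A (finite) block sequence: nonzero vectors with successive supports. -/
def IsBlockSeq {k : ℕ} (x : Fin k → (ℕ →₀ ℝ)) : Prop :=
  (∀ i, x i ≠ 0) ∧
  ∀ i j : Fin k, i < j → ∀ p ∈ (x i).support, ∀ q ∈ (x j).support, p < q

/-- A sequence of successive intervals `E₁ < E₂ < ... < E_n` of `ℕ`. -/
def IsSuccIntervals {n : ℕ} (E : Fin n → Finset ℕ) : Prop :=
  (∀ j, ∃ a b : ℕ, E j = Finset.Icc a b) ∧
  ∀ j j' : Fin n, j < j' → ∀ p ∈ E j, ∀ q ∈ E j', p < q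

/-- The equivalent norm `‖x‖_n = sup {∑_{j=1}^n ‖E_j x‖ : E₁ < ... < E_n intervals}`. -/
noncomputable def normN (B : BmBasis) (n : ℕ) (x : ℕ →₀ ℝ) : ℝ :=
  sSup { s : ℝ | ∃ E : Fin n → Finset ℕ, IsSuccIntervals E ∧
    s = ∑ j, B.N (restrictF x (E j)) }

/-!
Average a normalized block sequence `x₁, …, xₙ` that is 2-equivalent to the `ℓ₁ⁿ` basis:
`z = (x₁ + ⋯ + xₙ)/n`. The `ℓ₁` estimate gives `‖z‖ ≥ 1/2`. For successive intervals
`E₁ < ⋯ < Eₙ`, the pairs `(i, j)` with `Eⱼxᵢ ≠ 0` form a monotone staircase in the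
`n × n` grid, so `i + j` separates them and there are fewer than `2n`; each contributes
`‖Eⱼxᵢ‖ ≤ ‖xᵢ‖ = 1` by bimonotonicity, whence `‖z‖ₙ ≤ 2n/n = 2`.
-/

open Finset

lemma restrictF_smul (a : ℝ) (x : ℕ →₀ ℝ) (E : Finset ℕ) :
    restrictF (a • x) E = a • restrictF x E :=
  Finsupp.filter_smul

lemma restrictF_sum {ι : Type*} (s : Finset ι) (f : ι → ℕ →₀ ℝ) (E : Finset ℕ) :
    restrictF (∑ i ∈ s, f i) E = ∑ i ∈ s, restrictF (f i) E :=
  Finsupp.filter_sum s f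

lemma restrictF_empty (x : ℕ →₀ ℝ) : restrictF x ∅ = 0 :=
  (Finsupp.filter_eq_zero_iff _ _).2 fun _ h => absurd h (notMem_empty _)

lemma restrictF_eq_self {x : ℕ →₀ ℝ} {E : Finset ℕ} (h : x.support ⊆ E) : restrictF x E = x :=
  (Finsupp.filter_eq_self_iff _ _).2 fun _ hp => h (Finsupp.mem_support_iff.2 hp)

lemma exists_mem_support_of_restrictF_ne_zero {x : ℕ →₀ ℝ} {E : Finset ℕ}
    (h : restrictF x E ≠ 0) : ∃ p ∈ x.support, p ∈ E := by
  contrapose! h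
  exact (Finsupp.filter_eq_zero_iff _ _).2 fun p hpE =>
    Finsupp.notMem_support_iff.1 fun hp => h p hp hpE

namespace BmBasis

variable (B : BmBasis)

lemma N_zero : B.N 0 = 0 := (B.norm_eq_zero_iff 0).2 rfl

lemma N_sum_le {ι : Type*} (s : Finset ι) (f : ι → ℕ →₀ ℝ) :
    B.N (∑ i ∈ s, f i) ≤ ∑ i ∈ s, B.N (f i) :=
  le_sum_of_subadditive B.N B.N_zero.le B.norm_add_le s f

lemma N_restrictF_le {E : Finset ℕ} (hE : ∃ a b, E = Icc a b) (x : ℕ →₀ ℝ) :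
    B.N (restrictF x E) ≤ B.N x := by
  obtain ⟨a, b, rfl⟩ := hE
  exact B.bimono x a b

lemma sum_N_restrictF_smul {ι : Type*} (s : Finset ι) (E : ι → Finset ℕ) (c : ℝ)
    (x : ℕ →₀ ℝ) :
    ∑ j ∈ s, B.N (restrictF (c • x) (E j)) = |c| * ∑ j ∈ s, B.N (restrictF x (E j)) := by
  simp only [restrictF_smul, B.norm_smul, mul_sum]

end BmBasis

lemma isSuccIntervals_empty (n : ℕ) : IsSuccIntervals fun _ : Fin n => (∅ : Finset ℕ) :=
  ⟨fun _ => ⟨1, 0, by simp⟩, fun _ _ _ p hp => absurd hp (notMem_empty p)⟩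

section normN

variable (B : BmBasis) {n : ℕ}

lemma normN_le_of_forall {x : ℕ →₀ ℝ} {c : ℝ}
    (h : ∀ E : Fin n → Finset ℕ, IsSuccIntervals E → ∑ j, B.N (restrictF x (E j)) ≤ c) :
    normN B n x ≤ c :=
  csSup_le ⟨_, _, isSuccIntervals_empty n, rfl⟩ fun _ ⟨E, hE, hs⟩ => hs ▸ h E hE

lemma normN_bddAbove (x : ℕ →₀ ℝ) :
    BddAbove {s : ℝ | ∃ E : Fin n → Finset ℕ, IsSuccIntervals E ∧
      s = ∑ j, B.N (restrictF x (E j))} := by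
  refine ⟨n * B.N x, ?_⟩
  rintro _ ⟨E, hE, rfl⟩
  simpa using sum_le_card_nsmul univ _ _ fun j _ => B.N_restrictF_le (hE.1 j) x

lemma N_le_normN (hn : 0 < n) (x : ℕ →₀ ℝ) : B.N x ≤ normN B n x := by
  set E : Fin n → Finset ℕ := fun j => if (j : ℕ) = 0 then Icc 0 (x.support.sup id) else ∅
  have hE : IsSuccIntervals E := by
    refine ⟨fun j => ?_, fun j j' hjj' p _ q hq => ?_⟩
    · by_cases hj : (j : ℕ) = 0
      · exact ⟨0, x.support.sup id, if_pos hj⟩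
      · exact ⟨1, 0, by simp [E, hj]⟩
    · have hj' : (j' : ℕ) ≠ 0 := (Nat.zero_le _).trans_lt hjj' |>.ne'
      simp [E, hj'] at hq
  have hsum : ∑ j, B.N (restrictF x (E j)) = B.N x := by
    rw [sum_eq_single ⟨0, hn⟩]
    · refine congrArg B.N (restrictF_eq_self fun p hp => ?_)
      simpa [E] using le_sup (f := id) hp
    · intro j _ hj
      simp [E, show (j : ℕ) ≠ 0 from fun h => hj (Fin.ext h), restrictF_empty, B.N_zero]
    · simp
  exact le_csSup (normN_bddAbove B x) ⟨E, hE, hsum.symm⟩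

end normN

namespace IsBlockSeq

variable {m n : ℕ} {x : Fin m → ℕ →₀ ℝ} {E : Fin n → Finset ℕ}

lemma le_of_restrictF_ne_zero (hx : IsBlockSeq x) (hE : IsSuccIntervals E) {i i' : Fin m}
    {j j' : Fin n} (hii' : i < i') (h : restrictF (x i) (E j) ≠ 0)
    (h' : restrictF (x i') (E j') ≠ 0) : j ≤ j' := by
  by_contra! hj
  obtain ⟨p, hpx, hpE⟩ := exists_mem_support_of_restrictF_ne_zero h
  obtain ⟨q, hqx, hqE⟩ := exists_mem_support_of_restrictF_ne_zero h'
  exact (hx.2 i i' hii' p hpx q hqx).asymm (hE.2 j' j hj q hqE p hpE)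

lemma card_restrictF_ne_zero_le (hx : IsBlockSeq x) (hE : IsSuccIntervals E) :
    #{p : Fin m × Fin n | restrictF (x p.1) (E p.2) ≠ 0} ≤ m + n := by
  classical
  refine (card_le_card_of_injOn (t := range (m + n)) (fun p => (p.1 : ℕ) + p.2)
    (fun p _ => ?_) ?_).trans (card_range _).le
  · have := p.1.2
    have := p.2.2
    simp only [coe_range, Set.mem_Iio]
    omega
  · rintro ⟨i, j⟩ hp ⟨i', j'⟩ hq (hsum : (i : ℕ) + j = i' + j')
    simp only [coe_filter, mem_univ, true_and, Set.mem_ofPred_eq] at hp hq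
    rcases lt_trichotomy i i' with hii' | rfl | hii'
    · have := Fin.le_def.1 (le_of_restrictF_ne_zero hx hE hii' hp hq)
      have := Fin.lt_def.1 hii'
      omega
    · exact Prod.ext rfl (Fin.ext (by dsimp only; omega))
    · have := Fin.le_def.1 (le_of_restrictF_ne_zero hx hE hii' hq hp)
      have := Fin.lt_def.1 hii'
      omega

lemma sum_N_restrictF_sum_le (B : BmBasis) (hx : IsBlockSeq x) (hnorm : ∀ i, B.N (x i) ≤ 1)
    (hE : IsSuccIntervals E) :
    ∑ j, B.N (restrictF (∑ i, x i) (E j)) ≤ m + n := by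
  classical
  set S := ({p : Fin m × Fin n | restrictF (x p.1) (E p.2) ≠ 0} : Finset _)
  calc ∑ j, B.N (restrictF (∑ i, x i) (E j))
      ≤ ∑ j, ∑ i, B.N (restrictF (x i) (E j)) :=
        sum_le_sum fun j _ => restrictF_sum univ x (E j) ▸ B.N_sum_le _ _
    _ = ∑ p : Fin m × Fin n, B.N (restrictF (x p.1) (E p.2)) := by
        rw [sum_comm, ← Fintype.sum_prod_type']
    _ = ∑ p ∈ S, B.N (restrictF (x p.1) (E p.2)) := by
        refine (sum_subset (subset_univ S) fun p _ hp => ?_).symm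
        have h0 : restrictF (x p.1) (E p.2) = 0 := by simpa [S] using hp
        rw [h0, B.N_zero]
    _ ≤ #S := by
        simpa using sum_le_card_nsmul S _ 1 fun p _ =>
          (B.N_restrictF_le (hE.1 p.2) _).trans (hnorm p.1)
    _ ≤ m + n := by exact_mod_cast card_restrictF_ne_zero_le hx hE

end IsBlockSeq

/-- if `ℓ₁` is finitely represented on normalized block sequences with
constant 2 in a space `U` with a bimonotone basis, then for every `n` there is a vector
`x` with `1/2 ≤ ‖x‖ ≤ ‖x‖_n ≤ 2`. -/
theorem lemma1_full (B : BmBasis)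
    (hrep : ∀ m : ℕ, ∃ x : Fin m → (ℕ →₀ ℝ), IsBlockSeq x ∧ (∀ i, B.N (x i) = 1) ∧
      ∀ a : Fin m → ℝ, ∑ i, |a i| ≤ 2 * B.N (∑ i, a i • x i)) :
    ∀ n : ℕ, 0 < n → ∃ x : ℕ →₀ ℝ,
      (1 : ℝ) / 2 ≤ B.N x ∧ B.N x ≤ normN B n x ∧ normN B n x ≤ 2 := by
  intro n hn
  obtain ⟨x, hblock, hnorm, hl1⟩ := hrep n
  have hn' : (0 : ℝ) < n := by exact_mod_cast hn
  set z := (n : ℝ)⁻¹ • ∑ i, x i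
  have hz_ge : 1 / 2 ≤ B.N z := by
    have h := hl1 fun _ => (n : ℝ)⁻¹
    simp only [← smul_sum, sum_const, card_univ, Fintype.card_fin, nsmul_eq_mul,
      abs_of_pos (inv_pos.2 hn'), mul_inv_cancel₀ hn'.ne'] at h
    linarith
  have hz_le : normN B n z ≤ 2 := normN_le_of_forall B fun E hE => by
    rw [B.sum_N_restrictF_smul, abs_of_pos (inv_pos.2 hn')]
    calc (n : ℝ)⁻¹ * ∑ j, B.N (restrictF (∑ i, x i) (E j))
        ≤ (n : ℝ)⁻¹ * (n + n) := by
          gcongr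
          exact hblock.sum_N_restrictF_sum_le B (fun i => (hnorm i).le) hE
      _ = 2 := by field_simp; ring
  exact ⟨z, hz_ge, N_le_normN B hn z, hz_le⟩
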